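/- In the Mal'cev–Neumann division ring D = K((G)) as above, the element α = x₁⁻¹ + x₂⁻¹ + x₃⁻¹ + ⋯ (where xᵢ is the i-th standard generator of G) is transcendental over the center F = ℚ((H)): the powers 1, α, α², ..., αⁿ are F-linearly independent for every n. -/

import Mathlib

/-!
Every monomial in the support of `αⁱ` is a product of `i` inverted generators, so its
exponents are `≤ 0` and sum to `-i`; the coefficients of `αⁱ` are natural numbers, hence fixed
by every `σ g`. Given `∑ cᵢ αⁱ = 0` with the `cᵢ` supported on `H = 2G`, take `h` in the
support of `cₙ` and compare coefficients at `h · x₀⁻¹ ⋯ xₙ₋₁⁻¹`. A product `u · v` with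
`u ∈ H` and `v` in the support of `αⁱ` landing there has `v ≡ x₀⁻¹ ⋯ xₙ₋₁⁻¹ (mod 2)`, so the
first `n` exponents of `v` are odd, hence `≤ -1`. This forces `i ≥ n`, and for `i = n` it
forces `v = x₀⁻¹ ⋯ xₙ₋₁⁻¹` and `u = h`. The coefficient is therefore `cₙ(h)` times the
positive coefficient of `αⁿ` at `x₀⁻¹ ⋯ xₙ₋₁⁻¹`, so `cₙ = 0`; then induct on `n`.
-/

noncomputable section

/-- The subfield `K = ℚ(√p₀, √p₁, …)` of `ℝ` generated by the square roots of the
primes `p i`. -/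
def sqrtField (p : ℕ → ℕ) : Subfield ℝ :=
  Subfield.closure (Set.range fun i => Real.sqrt (p i))

/-- The underlying additive group of Mal'cev–Neumann series `K((G))`, where
`G = ⊕_{i≥1} ℤ` is ordered lexicographically: Hahn series over `Lex (ℕ →₀ ℤ)` with
coefficients in `K`. -/
abbrev MalcevNeumann (p : ℕ → ℕ) := HahnSeries (Lex (ℕ →₀ ℤ)) (sqrtField p)

/-- The twisted (crossed product) Mal'cev–Neumann multiplication
`(α · β)_g = ∑_{u + v = g} α_u · σ(u)(β_v)`, where `σ` is the action of `G` on `K`. -/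
def tmul (p : ℕ → ℕ) (σ : (ℕ →₀ ℤ) → (sqrtField p →+* sqrtField p))
    (α β : MalcevNeumann p) : MalcevNeumann p where
  coeff g := ∑ ij ∈ Finset.addAntidiagonal α.isPWO_support β.isPWO_support g,
      α.coeff ij.1 * σ (ofLex ij.1) (β.coeff ij.2)
  isPWO_support' := by
    apply (α.isPWO_support.add β.isPWO_support).mono
    intro g hg
    obtain ⟨ij, hij, -⟩ := Finset.exists_ne_zero_of_sum_ne_zero hg
    replace hij := Finset.mem_addAntidiagonal.1 hij
    exact hij.2.2 ▸ Set.add_mem_add hij.1 hij.2.1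

/-- Powers with respect to the twisted multiplication, `α⁰ = 1`. -/
def tpow (p : ℕ → ℕ) (σ : (ℕ →₀ ℤ) → (sqrtField p →+* sqrtField p))
    (α : MalcevNeumann p) : ℕ → MalcevNeumann p
  | 0 => HahnSeries.single (0 : Lex (ℕ →₀ ℤ)) (1 : sqrtField p)
  | n + 1 => tmul p σ (tpow p σ α n) α

open Finset

namespace Finsupp

variable {ι : Type*}

theorem degree_nonpos {w : ι →₀ ℤ} (hw : ∀ j, w j ≤ 0) : w.degree ≤ 0 :=
  Finset.sum_nonpos fun j _ => hw j

theorem eq_zero_of_nonpos_of_degree_eq_zero {w : ι →₀ ℤ} (hw : ∀ j, w j ≤ 0)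
    (h : w.degree = 0) : w = 0 := by
  ext j
  by_cases hj : j ∈ w.support
  · exact (Finset.sum_eq_zero_iff_of_nonpos fun j _ => hw j).1 h j hj
  · exact notMem_support_iff.1 hj

end Finsupp

/-- The exponent `x_{j₁}⁻¹ ⋯ x_{jₖ}⁻¹` for `s = {j₁, …, jₖ}`. -/
def negIndicator {ι : Type*} (s : Finset ι) : ι →₀ ℤ :=
  ∑ j ∈ s, Finsupp.single j (-1)

section negIndicator

variable {ι : Type*} (s : Finset ι)

theorem negIndicator_apply [DecidableEq ι] (j : ι) :
    negIndicator s j = if j ∈ s then -1 else 0 := by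
  simp only [negIndicator, Finsupp.finsetSum_apply, Finsupp.single_apply, Finset.sum_ite_eq']

theorem degree_negIndicator : (negIndicator s).degree = -(#s : ℤ) := by
  simp [negIndicator, map_sum]

variable {s}

theorem odd_of_even_add_eq_add_negIndicator {a b g : ι →₀ ℤ} (ha : Even a) (hg : Even g)
    (h : a + b = g + negIndicator s) {j : ι} (hj : j ∈ s) : Odd (b j) := by
  classical
  obtain ⟨x, rfl⟩ := ha
  obtain ⟨y, rfl⟩ := hg
  have hj' := DFunLike.congr_fun h j
  simp only [Finsupp.add_apply, negIndicator_apply, if_pos hj] at hj'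
  exact ⟨y j - x j - 1, by omega⟩

variable {v : ι →₀ ℤ} (hv : ∀ j, v j ≤ 0) (hodd : ∀ j ∈ s, Odd (v j))
include hv hodd

theorem sub_negIndicator_nonpos (j : ι) : (v - negIndicator s) j ≤ 0 := by
  classical
  rw [Finsupp.sub_apply, negIndicator_apply]
  split_ifs with hj
  · obtain ⟨k, hk⟩ := hodd j hj
    have := hv j
    omega
  · simpa using hv j

theorem card_le_neg_degree_of_odd : (#s : ℤ) ≤ -v.degree := by
  have := Finsupp.degree_nonpos (sub_negIndicator_nonpos hv hodd)
  rw [map_sub, degree_negIndicator] at this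
  omega

theorem eq_negIndicator_of_odd_of_degree_eq (hdeg : v.degree = -(#s : ℤ)) :
    v = negIndicator s := by
  refine sub_eq_zero.1 (Finsupp.eq_zero_of_nonpos_of_degree_eq_zero
    (sub_negIndicator_nonpos hv hodd) ?_)
  rw [map_sub, degree_negIndicator, hdeg, sub_self]

end negIndicator

section MalcevNeumann

variable {p : ℕ → ℕ} {σ : (ℕ →₀ ℤ) → (sqrtField p →+* sqrtField p)}

theorem coeff_tmul (a b : MalcevNeumann p) (g : Lex (ℕ →₀ ℤ)) :
    (tmul p σ a b).coeff g = ∑ ij ∈ Finset.antidiagonal a.isPWO_support b.isPWO_support g,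
      a.coeff ij.1 * σ (ofLex ij.1) (b.coeff ij.2) := rfl

@[simp]
theorem zero_tmul (b : MalcevNeumann p) : tmul p σ 0 b = 0 := by
  ext g
  simp [coeff_tmul]

theorem exists_natCast_coeff_tmul {a b : MalcevNeumann p}
    (ha : ∀ g, ∃ m : ℕ, a.coeff g = m) (hb : ∀ g, ∃ m : ℕ, b.coeff g = m)
    (g : Lex (ℕ →₀ ℤ)) :
    ∃ m : ℕ, (tmul p σ a b).coeff g = m := by
  suffices (tmul p σ a b).coeff g ∈ (Nat.castRingHom (sqrtField p)).rangeS by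
    obtain ⟨m, hm⟩ := this
    exact ⟨m, hm.symm⟩
  refine Subsemiring.sum_mem _ fun ij _ => Subsemiring.mul_mem _ ?_ ?_
  · obtain ⟨m, hm⟩ := ha ij.1
    exact ⟨m, hm.symm⟩
  · obtain ⟨m, hm⟩ := hb ij.2
    exact ⟨m, by simp [hm]⟩

variable {α : MalcevNeumann p}

theorem exists_natCast_coeff_tpow (hnat : ∀ g, ∃ m : ℕ, α.coeff g = m) (i : ℕ)
    (g : Lex (ℕ →₀ ℤ)) : ∃ m : ℕ, (tpow p σ α i).coeff g = m := by
  induction i generalizing g with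
  | zero =>
    rw [tpow, HahnSeries.coeff_single]
    split_ifs
    exacts [⟨1, Nat.cast_one.symm⟩, ⟨0, Nat.cast_zero.symm⟩]
  | succ k ih => exact exists_natCast_coeff_tmul ih hnat g

theorem coeff_tpow_negIndicator_pos (hnat : ∀ g, ∃ m : ℕ, α.coeff g = m)
    (hone : ∀ j : ℕ, α.coeff (toLex (Finsupp.single j (-1 : ℤ))) = 1) (s : Finset ℕ) :
    0 < (tpow p σ α #s).coeff (toLex (negIndicator s)) := by
  classical
  induction s using Finset.cons_induction with
  | empty => simp [tpow, negIndicator]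
  | cons a s ha ih =>
    rw [card_cons, tpow, coeff_tmul]
    refine Finset.sum_pos' (fun ij _ => ?_)
      ⟨(toLex (negIndicator s), toLex (Finsupp.single a (-1))), ?_, ?_⟩
    · obtain ⟨m, hm⟩ := exists_natCast_coeff_tpow hnat #s ij.1
      obtain ⟨m', hm'⟩ := hnat ij.2
      rw [hm, hm', map_natCast]
      positivity
    · refine Finset.mem_antidiagonal.2
        ⟨ih.ne', by rw [HahnSeries.mem_support, hone]; exact one_ne_zero, ?_⟩
      change toLex (negIndicator s + Finsupp.single a (-1)) = toLex (negIndicator (cons a s ha))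
      rw [negIndicator, negIndicator, sum_cons, add_comm]
    · rw [hone, map_one, mul_one]
      exact ih

variable (hsupp : α.support ⊆ Set.range fun i => toLex (Finsupp.single i (-1 : ℤ)))
include hsupp

theorem nonpos_and_degree_eq_of_mem_support_tpow {i : ℕ} {g : Lex (ℕ →₀ ℤ)}
    (hg : g ∈ (tpow p σ α i).support) :
    (∀ j, ofLex g j ≤ 0) ∧ (ofLex g).degree = -(i : ℤ) := by
  induction i generalizing g with
  | zero =>
    obtain rfl : g = 0 := by simpa [tpow] using hg
    simp
  | succ k ih =>
    obtain ⟨⟨a, b⟩, hab, -⟩ := Finset.exists_ne_zero_of_sum_ne_zero hg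
    obtain ⟨ha, hb, rfl⟩ := Finset.mem_antidiagonal.1 hab
    obtain ⟨j, rfl⟩ := hsupp hb
    obtain ⟨hle, hdeg⟩ := ih (g := a) ha
    refine ⟨fun j' => ?_, ?_⟩
    · have := hle j'
      simp only [ofLex_add, ofLex_toLex, Finsupp.add_apply, Finsupp.single_apply]
      split_ifs <;> omega
    · simp only [ofLex_add, ofLex_toLex, map_add, hdeg, Finsupp.degree_single]
      push_cast
      ring

section Parity

variable {s : Finset ℕ} {a b g : Lex (ℕ →₀ ℤ)} (ha : Even (ofLex a)) (hg : Even (ofLex g))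
  (hab : a + b = g + toLex (negIndicator s))
include ha hg hab

theorem card_le_of_even_add_mem_support_tpow {i : ℕ} (hb : b ∈ (tpow p σ α i).support) :
    #s ≤ i := by
  obtain ⟨hle, hdeg⟩ := nonpos_and_degree_eq_of_mem_support_tpow hsupp hb
  have := card_le_neg_degree_of_odd hle fun j => odd_of_even_add_eq_add_negIndicator ha hg hab
  omega

theorem eq_of_even_add_mem_support_tpow_card (hb : b ∈ (tpow p σ α #s).support) :
    a = g ∧ b = toLex (negIndicator s) := by
  obtain ⟨hle, hdeg⟩ := nonpos_and_degree_eq_of_mem_support_tpow hsupp hb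
  have hb' : b = toLex (negIndicator s) := eq_negIndicator_of_odd_of_degree_eq hle
    (fun j => odd_of_even_add_eq_add_negIndicator ha hg hab) hdeg
  exact ⟨add_right_cancel (hb' ▸ hab), hb'⟩

end Parity

section LeadingCoeff

variable {c : MalcevNeumann p} (hc : ∀ g ∈ c.support, Even (ofLex g))
  {g : Lex (ℕ →₀ ℤ)} (hg : Even (ofLex g)) (s : Finset ℕ)
include hc hg

theorem coeff_tmul_tpow_of_lt_card {i : ℕ} (hi : i < #s) :
    (tmul p σ c (tpow p σ α i)).coeff (g + toLex (negIndicator s)) = 0 := by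
  refine Finset.sum_eq_zero fun ab hab => ?_
  obtain ⟨ha, hb, hab⟩ := Finset.mem_antidiagonal.1 hab
  exact absurd (card_le_of_even_add_mem_support_tpow hsupp (hc _ ha) hg hab hb) hi.not_ge

theorem coeff_tmul_tpow_card (hnat : ∀ g, ∃ m : ℕ, α.coeff g = m) :
    (tmul p σ c (tpow p σ α #s)).coeff (g + toLex (negIndicator s)) =
      c.coeff g * (tpow p σ α #s).coeff (toLex (negIndicator s)) := by
  obtain ⟨m, hm⟩ := exists_natCast_coeff_tpow (σ := σ) hnat #s (toLex (negIndicator s))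
  rw [coeff_tmul, Finset.sum_eq_single (g, toLex (negIndicator s)), hm, map_natCast]
  · rintro ⟨a, b⟩ hab hne
    obtain ⟨ha, hb, hab⟩ := Finset.mem_antidiagonal.1 hab
    obtain ⟨rfl, rfl⟩ := eq_of_even_add_mem_support_tpow_card hsupp (hc _ ha) hg hab hb
    exact absurd rfl hne
  · intro hmem
    by_contra hne
    refine hmem (Finset.mem_antidiagonal.2 ⟨left_ne_zero_of_mul hne, fun h => ?_, rfl⟩)
    simp [h] at hne

end LeadingCoeff

theorem eq_zero_of_sum_tmul_tpow_eq_zero (hnat : ∀ g, ∃ m : ℕ, α.coeff g = m)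
    (hone : ∀ j : ℕ, α.coeff (toLex (Finsupp.single j (-1 : ℤ))) = 1)
    {c : ℕ → MalcevNeumann p} (hc : ∀ i, ∀ g ∈ (c i).support, Even (ofLex g)) {n : ℕ}
    (hsum : ∑ i ∈ range (n + 1), tmul p σ (c i) (tpow p σ α i) = 0) : c n = 0 := by
  by_contra hne
  obtain ⟨g, hg⟩ := HahnSeries.support_nonempty_iff.2 hne
  have hlow (i : ℕ) (hi : i ∈ range n) :=
    coeff_tmul_tpow_of_lt_card (σ := σ) hsupp (hc i) (hc n g hg) (range n) (by simpa using hi)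
  have htop := coeff_tmul_tpow_card (σ := σ) hsupp (hc n) (hc n g hg) (range n) hnat
  have hpos := coeff_tpow_negIndicator_pos (σ := σ) hnat hone (range n)
  rw [card_range] at htop hpos
  have hcoeff : (∑ i ∈ range (n + 1), tmul p σ (c i) (tpow p σ α i)).coeff
      (g + toLex (negIndicator (range n))) = 0 := by
    rw [hsum, HahnSeries.coeff_zero]
  rw [sum_range_succ, HahnSeries.coeff_add, HahnSeries.coeff_sum, sum_eq_zero hlow, zero_add,
    htop] at hcoeff
  exact hg ((mul_eq_zero.1 hcoeff).resolve_right hpos.ne')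

end MalcevNeumann

theorem stmt_18_general (p : ℕ → ℕ)
    (σ : (ℕ →₀ ℤ) → (sqrtField p →+* sqrtField p))
    (α : MalcevNeumann p)
    (hα1 : ∀ i : ℕ, α.coeff (toLex (Finsupp.single i (-1 : ℤ))) = 1)
    (hα2 : ∀ g : Lex (ℕ →₀ ℤ),
      (∀ i : ℕ, g ≠ toLex (Finsupp.single i (-1 : ℤ))) → α.coeff g = 0)
    (n : ℕ) (c : ℕ → MalcevNeumann p)
    (hc : ∀ i, ∀ g ∈ (c i).support,
      (∃ h : ℕ →₀ ℤ, ofLex g = h + h) ∧ ∃ q : ℚ, (c i).coeff g = (q : sqrtField p))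
    (hsum : ∑ i ∈ Finset.range (n + 1), tmul p σ (c i) (tpow p σ α i) = 0) :
    ∀ i ≤ n, c i = 0 := by
  have hnat (g : Lex (ℕ →₀ ℤ)) : ∃ m : ℕ, α.coeff g = m := by
    by_cases h : ∃ i, g = toLex (Finsupp.single i (-1))
    · obtain ⟨i, rfl⟩ := h
      exact ⟨1, by rw [hα1, Nat.cast_one]⟩
    · simp only [not_exists] at h
      exact ⟨0, by rw [hα2 g h, Nat.cast_zero]⟩
  have hsupp : α.support ⊆ Set.range fun i => toLex (Finsupp.single i (-1 : ℤ)) :=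
    fun g hg => by_contra fun h => hg (hα2 g fun i hi => h ⟨i, hi.symm⟩)
  have heven (i : ℕ) (g : Lex (ℕ →₀ ℤ)) (hg : g ∈ (c i).support) : Even (ofLex g) :=
    (hc i g hg).1
  induction n with
  | zero =>
    rintro i hi
    obtain rfl := Nat.le_zero.1 hi
    exact eq_zero_of_sum_tmul_tpow_eq_zero hsupp hnat hα1 heven hsum
  | succ n ih =>
    have htop := eq_zero_of_sum_tmul_tpow_eq_zero hsupp hnat hα1 heven hsum
    rw [sum_range_succ, htop, zero_tmul, add_zero] at hsum
    rintro i hi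
    rcases Nat.le_succ_iff.1 hi with hi | rfl
    exacts [ih hsum i hi, htop]

/-- In the Mal'cev–Neumann division ring `D = K((G))`, the element
`α = x₁⁻¹ + x₂⁻¹ + ⋯` (where `xᵢ` is the `i`-th standard generator of `G`) is
transcendental over the center `F = ℚ((H))`: the powers `1, α, α², …, αⁿ` are
`F`-linearly independent for every `n`. -/
theorem stmt_18 (p : ℕ → ℕ) (hp : ∀ i, (p i).Prime) (hmono : StrictMono p)
    (σ : (ℕ →₀ ℤ) → (sqrtField p →+* sqrtField p))
    (hσ0 : σ 0 = RingHom.id _)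
    (hσadd : ∀ g h, σ (g + h) = (σ g).comp (σ h))
    (hσQ : ∀ (g : ℕ →₀ ℤ) (q : ℚ), σ g (q : sqrtField p) = (q : sqrtField p))
    (hσsqrt : ∀ (g : ℕ →₀ ℤ) (i : ℕ) (y : sqrtField p), (y : ℝ) = Real.sqrt (p i) →
      ((σ g y : sqrtField p) : ℝ) = (-1 : ℝ) ^ (g i) * Real.sqrt (p i))
    (α : MalcevNeumann p)
    (hα1 : ∀ i : ℕ, α.coeff (toLex (Finsupp.single i (-1 : ℤ))) = 1)
    (hα2 : ∀ g : Lex (ℕ →₀ ℤ),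
      (∀ i : ℕ, g ≠ toLex (Finsupp.single i (-1 : ℤ))) → α.coeff g = 0)
    (n : ℕ) (c : ℕ → MalcevNeumann p)
    (hc : ∀ i, ∀ g ∈ (c i).support,
      (∃ h : ℕ →₀ ℤ, ofLex g = h + h) ∧ ∃ q : ℚ, (c i).coeff g = (q : sqrtField p))
    (hsum : ∑ i ∈ Finset.range (n + 1), tmul p σ (c i) (tpow p σ α i) = 0) :
    ∀ i ≤ n, c i = 0 :=
  stmt_18_general p σ α hα1 hα2 n c hc hsum

end
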